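/- arXiv:math/0507194 — 3 statements merged into one kernel-verified Lean document; each statement's English description precedes it below -/
import Mathlib

section
/- Let f ∈ ℂ[x₀,x₁,x₂] be a nonzero homogeneous polynomial of degree n that vanishes to order at least n−1 at a point P of ℙ²(ℂ), and suppose f = g·h with g, h homogeneous and nonconstant. Then g vanishes at P to order at least deg g, or h vanishes at P to order at least deg h. -/
open MvPolynomial

/-- The iterated partial derivative `∂₀^{α 0} ∂₁^{α 1} ∂₂^{α 2}` on `ℂ[x₀,x₁,x₂]`. -/
noncomputable def iterPD (α : Fin 3 → ℕ) :
    MvPolynomial (Fin 3) ℂ →ₗ[ℂ] MvPolynomial (Fin 3) ℂ :=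
  ((pderiv (0 : Fin 3)).toLinearMap ^ α 0) ∘ₗ
    ((pderiv (1 : Fin 3)).toLinearMap ^ α 1) ∘ₗ ((pderiv (2 : Fin 3)).toLinearMap ^ α 2)

/-- `f` vanishes to order at least `k` at the point of `ℙ²(ℂ)` with representative `a`:
every iterated partial derivative of total order `< k` vanishes at `a`. -/
def VanishesToOrder (k : ℕ) (a : Fin 3 → ℂ) (f : MvPolynomial (Fin 3) ℂ) : Prop :=
  ∀ α : Fin 3 → ℕ, α 0 + α 1 + α 2 < k → eval a (iterPD α f) = 0

/-!
Shifting `a` to the origin, `f ↦ f(x + a)`, turns the partial derivative `∂^α f (a)` into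
`α! ·` (the `x^α`-coefficient of the shifted polynomial). Hence `f` vanishes to order `≥ k`
at `a` iff the shifted polynomial, viewed as a power series, has order `≥ k`. Orders add
under multiplication, so if `g` and `h` had orders `< p` and `< q` at `P`, then `f = g * h`
would have order `≤ p + q - 2 = n - 2` there.
-/

namespace MvPolynomial

variable {σ R : Type*} [CommSemiring R]

noncomputable def taylor (a : σ → R) : MvPolynomial σ R →ₐ[R] MvPolynomial σ R :=
  aeval fun i => X i + C (a i)

@[simp]
theorem taylor_X (a : σ → R) (i : σ) : taylor a (X i) = X i + C (a i) :=
  aeval_X _ _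

theorem constantCoeff_taylor (a : σ → R) (f : MvPolynomial σ R) :
    constantCoeff (taylor a f) = eval a f := by
  induction f using MvPolynomial.induction_on with
  | C c => simp [taylor]
  | add f g hf hg => simp only [map_add, hf, hg]
  | mul_X f i hf => simp [hf]

theorem pderiv_taylor (a : σ → R) (i : σ) (f : MvPolynomial σ R) :
    pderiv i (taylor a f) = taylor a (pderiv i f) := by
  classical
  induction f using MvPolynomial.induction_on with
  | C c => simp [taylor]
  | add f g hf hg => simp only [map_add, hf, hg]
  | mul_X f j hf => simp [pderiv_X, Pi.single_apply, hf, apply_ite (taylor a)]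

theorem pderiv_pow_taylor (a : σ → R) (i : σ) (k : ℕ) (f : MvPolynomial σ R) :
    ((pderiv i).toLinearMap ^ k) (taylor a f) = taylor a (((pderiv i).toLinearMap ^ k) f) := by
  induction k with
  | zero => rfl
  | succ k ih =>
    rw [pow_succ', Module.End.mul_apply, ih, Module.End.mul_apply]
    exact pderiv_taylor a i _

theorem coeff_pderiv_pow (i : σ) (k : ℕ) (m : σ →₀ ℕ) (f : MvPolynomial σ R) :
    coeff m (((pderiv i).toLinearMap ^ k) f) =
      (m i + 1).ascFactorial k * coeff (m + Finsupp.single i k) f := by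
  induction k generalizing f with
  | zero => simp
  | succ k ih =>
    rw [pow_succ, Module.End.mul_apply, ih, Derivation.coeFn_coe, coeff_pderiv, add_assoc,
      ← Finsupp.single_add, Nat.ascFactorial_succ, Finsupp.add_apply, Finsupp.single_eq_same]
    push_cast
    ring

theorem coeff_pderiv_pow_of_apply_eq_zero {i : σ} {m : σ →₀ ℕ}
    (hm : m i = 0) (k : ℕ) (f : MvPolynomial σ R) :
    coeff m (((pderiv i).toLinearMap ^ k) f) = k.factorial * coeff (m + Finsupp.single i k) f := by
  rw [coeff_pderiv_pow, hm, zero_add, Nat.one_ascFactorial]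

theorem iterPD_taylor (a : Fin 3 → ℂ) (α : Fin 3 → ℕ) (f : MvPolynomial (Fin 3) ℂ) :
    iterPD α (taylor a f) = taylor a (iterPD α f) := by
  simp only [iterPD, LinearMap.comp_apply, pderiv_pow_taylor]

theorem constantCoeff_iterPD (α : Fin 3 → ℕ) (f : MvPolynomial (Fin 3) ℂ) :
    constantCoeff (iterPD α f) = (α 0).factorial * (α 1).factorial * (α 2).factorial *
      coeff (Finsupp.equivFunOnFinite.symm α) f := by
  rw [constantCoeff_eq, iterPD, LinearMap.comp_apply, LinearMap.comp_apply,
    coeff_pderiv_pow_of_apply_eq_zero (by simp), coeff_pderiv_pow_of_apply_eq_zero (by simp),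
    coeff_pderiv_pow_of_apply_eq_zero (by simp)]
  have hα : 0 + Finsupp.single 0 (α 0) + Finsupp.single 1 (α 1) + Finsupp.single 2 (α 2) =
      Finsupp.equivFunOnFinite.symm α := by
    ext j; fin_cases j <;> simp
  rw [hα]
  ring

theorem eval_iterPD (a : Fin 3 → ℂ) (α : Fin 3 → ℕ) (f : MvPolynomial (Fin 3) ℂ) :
    eval a (iterPD α f) = (α 0).factorial * (α 1).factorial * (α 2).factorial *
      coeff (Finsupp.equivFunOnFinite.symm α) (taylor a f) := by
  rw [← constantCoeff_taylor, ← iterPD_taylor, constantCoeff_iterPD]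

end MvPolynomial

theorem Finsupp.degree_equivFunOnFinite_symm_fin3 (α : Fin 3 → ℕ) :
    (Finsupp.equivFunOnFinite.symm α).degree = α 0 + α 1 + α 2 := by
  simp [Finsupp.degree_eq_sum, Fin.sum_univ_three]

theorem vanishesToOrder_iff_le_order {k : ℕ} {a : Fin 3 → ℂ} {f : MvPolynomial (Fin 3) ℂ} :
    VanishesToOrder k a f ↔ (k : ℕ∞) ≤ (taylor a f : MvPowerSeries (Fin 3) ℂ).order := by
  have hfac (α : Fin 3 → ℕ) :
      ((α 0).factorial * (α 1).factorial * (α 2).factorial : ℂ) ≠ 0 := by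
    simp [Nat.factorial_ne_zero]
  constructor
  · intro h
    refine MvPowerSeries.nat_le_order fun d hd => ?_
    have hd0 := h d <| by
      rwa [← Finsupp.equivFunOnFinite_symm_coe d,
        Finsupp.degree_equivFunOnFinite_symm_fin3] at hd
    rw [eval_iterPD, Finsupp.equivFunOnFinite_symm_coe] at hd0
    rw [coeff_coe]
    exact (mul_eq_zero.mp hd0).resolve_left (hfac d)
  · intro h α hα
    rw [eval_iterPD, ← coeff_coe, MvPowerSeries.coeff_of_lt_order (lt_of_lt_of_le ?_ h), mul_zero]
    rw [Finsupp.degree_equivFunOnFinite_symm_fin3]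
    exact_mod_cast hα

theorem stmt_2_general (n p q : ℕ) (f g h : MvPolynomial (Fin 3) ℂ)
    (hf0 : f ≠ 0) (hf : f.IsHomogeneous n)
    (P : Projectivization ℂ (Fin 3 → ℂ))
    (hvan : VanishesToOrder (n - 1) P.rep f)
    (hfactor : f = g * h)
    (hg : g.IsHomogeneous p) (hh : h.IsHomogeneous q) :
    VanishesToOrder p P.rep g ∨ VanishesToOrder q P.rep h := by
  have hn : n = p + q := hf.inj_right (hfactor ▸ hg.mul hh) hf0
  rw [vanishesToOrder_iff_le_order, hfactor, map_mul, coe_mul, MvPowerSeries.order_mul] at hvan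
  simp only [vanishesToOrder_iff_le_order]
  by_contra! ⟨hgP, hhP⟩
  generalize (taylor P.rep g : MvPowerSeries (Fin 3) ℂ).order = A at *
  generalize (taylor P.rep h : MvPowerSeries (Fin 3) ℂ).order = B at *
  lift A to ℕ using hgP.ne_top
  lift B to ℕ using hhP.ne_top
  norm_cast at *
  omega

theorem stmt_2 (n p q : ℕ) (f g h : MvPolynomial (Fin 3) ℂ)
    (hf0 : f ≠ 0) (hf : f.IsHomogeneous n)
    (P : Projectivization ℂ (Fin 3 → ℂ))
    (hvan : VanishesToOrder (n - 1) P.rep f)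
    (hfactor : f = g * h)
    (hg : g.IsHomogeneous p) (hh : h.IsHomogeneous q)
    (hp : 0 < p) (hq : 0 < q) :
    VanishesToOrder p P.rep g ∨ VanishesToOrder q P.rep h :=
  stmt_2_general n p q f g h hf0 hf P hvan hfactor hg hh
end

section
/- Let f, g ∈ ℂ[x₀,x₁,x₂] be homogeneous polynomials of degrees m ≥ 1 and n ≥ 1 respectively, having no common nonconstant factor. Then the set of common zeros of f and g in ℙ²(ℂ) is finite and has at most m·n elements. -/
/-!
It suffices to bound the number `k` of points of any finite set of common zeros. Let
`d = m + n + k` and write `S_e` for the forms of degree `e` in three variables. Coprimality of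
`f` and `g` makes `0 → S_k → S_{n+k} × S_{m+k} → S_d`, `c ↦ (g c, -f c)`, `(a, b) ↦ f a + g b`
exact, and the image lies in the kernel of evaluation `S_d → K^k` at the `k` points, which is
surjective because products of linear forms separate finitely many points. Since
`dim S_e = (e + 2).choose 2`, counting dimensions gives
`k ≤ (d+2).choose 2 + (k+2).choose 2 - (n+k+2).choose 2 - (m+k+2).choose 2 = m * n`.
-/

open MvPolynomial
open scoped LinearAlgebra.Projectivization

theorem Set.finite_and_ncard_le_of_forall_finset_card_le {α : Type*} {s : Set α} {N : ℕ}
    (h : ∀ t : Finset α, ↑t ⊆ s → t.card ≤ N) : s.Finite ∧ s.ncard ≤ N := by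
  have hs : s.Finite := by
    by_contra hs
    obtain ⟨t, hts, htN⟩ := Set.Infinite.exists_subset_card_eq hs (N + 1)
    have := h t hts
    omega
  refine ⟨hs, ?_⟩
  rw [Set.ncard_eq_toFinset_card s hs]
  exact h _ (by simp)

theorem Nat.choose_two_add_add (a m n : ℕ) :
    (a + m + n).choose 2 + a.choose 2 = m * n + (a + m).choose 2 + (a + n).choose 2 := by
  qify
  simp only [Nat.cast_choose_two]
  push_cast
  ring

theorem Module.finrank_add_finrank_le_of_exact {K U V W Z : Type*} [Field K]
    [AddCommGroup U] [AddCommGroup V] [AddCommGroup W] [AddCommGroup Z]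
    [Module K U] [Module K V] [Module K W] [Module K Z] [FiniteDimensional K V]
    [FiniteDimensional K W] {Ψ : U →ₗ[K] V} {Φ : V →ₗ[K] W} {E : W →ₗ[K] Z}
    (hΨ : Function.Injective Ψ) (hΨΦ : Function.Exact Ψ Φ) (hE : Function.Surjective E)
    (hΦE : E ∘ₗ Φ = 0) :
    finrank K Z + finrank K V ≤ finrank K W + finrank K U := by
  have hV := LinearMap.finrank_range_add_finrank_ker Φ
  have hW := LinearMap.finrank_range_add_finrank_ker E
  rw [hΨΦ.linearMap_ker_eq, LinearMap.finrank_range_of_inj hΨ] at hV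
  rw [LinearMap.range_eq_top.2 hE, finrank_top] at hW
  have := Submodule.finrank_mono (LinearMap.range_le_ker_iff.2 hΦE)
  omega

namespace MvPolynomial

variable {σ R K : Type*} [CommSemiring R] [Field K]

instance [Finite σ] (n : ℕ) : Module.Finite R (homogeneousSubmodule σ R n) :=
  Module.Finite.iff_fg.2 (homogeneousSubmodule_fg σ R n)

theorem finrank_homogeneousSubmodule [StrongRankCondition R] [Fintype σ] [DecidableEq σ]
    (n : ℕ) :
    Module.finrank R (homogeneousSubmodule σ R n) = (Fintype.card σ + n - 1).choose n := by
  have hsupp :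
      {d : σ →₀ ℕ | d.degree = n} = ((Finset.univ : Finset σ).finsuppAntidiag n : Set _) := by
    ext d
    simp [Finset.mem_finsuppAntidiag, Finsupp.degree_eq_sum]
  rw [homogeneousSubmodule_eq_finsupp_supported, hsupp]
  refine (Module.finrank_eq_nat_card_basis (basisRestrictSupport R _)).trans ?_
  rw [Nat.card_coe_set_eq, Set.ncard_coe_finset, Finset.card_finsuppAntidiag_nat_eq_choose,
    Finset.card_univ]

theorem finrank_homogeneousSubmodule_fin_three (e : ℕ) :
    Module.finrank K (homogeneousSubmodule (Fin 3) K e) = (e + 2).choose 2 := by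
  rw [finrank_homogeneousSubmodule, Fintype.card_fin, show 3 + e - 1 = e + 2 by omega,
    Nat.choose_symm_add]

theorem homogeneousComponent_add_mul_of_isHomogeneous {g : MvPolynomial σ R} {n : ℕ}
    (hg : g.IsHomogeneous n) (c : MvPolynomial σ R) (i : ℕ) :
    homogeneousComponent (i + n) (c * g) = homogeneousComponent i c * g := by
  let := MvPolynomial.gradedAlgebra (σ := σ) (R := R)
  rw [← decomposition.decompose'_apply, ← decomposition.decompose'_apply]
  exact DirectSum.coe_decompose_mul_add_of_right_mem _ ((mem_homogeneousSubmodule n g).2 hg)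

theorem exists_isHomogeneous_of_mul_add_mul_eq_zero {f g a b : MvPolynomial σ K} {n k : ℕ}
    (hfg : IsRelPrime f g) (hg0 : g ≠ 0) (hg : g.IsHomogeneous n)
    (ha : a.IsHomogeneous (n + k)) (h : f * a + g * b = 0) :
    ∃ c, c.IsHomogeneous k ∧ a = g * c ∧ b = -(f * c) := by
  rw [add_comm] at ha
  obtain ⟨c, rfl⟩ : g ∣ a := hfg.symm.dvd_of_dvd_mul_left ⟨-b, by linear_combination h⟩
  -- `g * c` is homogeneous of degree `k + n`, so only the degree-`k` part of `c` contributes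
  have hc : g * c = g * homogeneousComponent k c := by
    rw [mul_comm g (homogeneousComponent k c), ← homogeneousComponent_add_mul_of_isHomogeneous hg,
      mul_comm c g, homogeneousComponent_of_mem ((mem_homogeneousSubmodule _ _).2 ha), if_pos rfl]
  refine ⟨_, homogeneousComponent_isHomogeneous k c, hc, ?_⟩
  have : g * (b + f * homogeneousComponent k c) = 0 := by linear_combination h - f * hc
  linear_combination (mul_eq_zero.1 this).resolve_left hg0

theorem isRelPrime_of_not_exists_dvd_totalDegree_pos [Nonempty σ] {f g : MvPolynomial σ K}
    (h : ¬∃ d : MvPolynomial σ K, d ∣ f ∧ d ∣ g ∧ 0 < d.totalDegree) : IsRelPrime f g := by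
  intro p hpf hpg
  have hp : p = C (p.coeff 0) := by
    rw [← totalDegree_eq_zero_iff_eq_C]
    by_contra hp
    exact h ⟨p, hpf, hpg, Nat.pos_of_ne_zero hp⟩
  rcases eq_or_ne (p.coeff 0) 0 with h0 | h0
  · rw [h0, C_0] at hp
    subst hp
    obtain ⟨i⟩ := ‹Nonempty σ›
    refine absurd ⟨X i, ?_, ?_, by simp⟩ h
    · rw [zero_dvd_iff.1 hpf]; exact dvd_zero _
    · rw [zero_dvd_iff.1 hpg]; exact dvd_zero _
  · rw [hp]
    exact (isUnit_iff_ne_zero.2 h0).map C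

noncomputable def mulLeftHomogeneous {f : MvPolynomial σ R} {m : ℕ} (hf : f.IsHomogeneous m)
    {i j : ℕ} (h : m + i = j) : homogeneousSubmodule σ R i →ₗ[R] homogeneousSubmodule σ R j :=
  (LinearMap.mulLeft R f).restrict fun _ hx ↦ h ▸ hf.mul hx

section Koszul

variable {f g : MvPolynomial σ K} {m n : ℕ} (hf : f.IsHomogeneous m) (hg : g.IsHomogeneous n)
  (k : ℕ)

noncomputable def homogeneousSyzygy :
    homogeneousSubmodule σ K k →ₗ[K]
      homogeneousSubmodule σ K (n + k) × homogeneousSubmodule σ K (m + k) :=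
  (mulLeftHomogeneous hg rfl).prod (-mulLeftHomogeneous hf rfl)

noncomputable def homogeneousMulAddMul :
    homogeneousSubmodule σ K (n + k) × homogeneousSubmodule σ K (m + k) →ₗ[K]
      homogeneousSubmodule σ K (m + n + k) :=
  (mulLeftHomogeneous hf (by ring)).coprod (mulLeftHomogeneous hg (by ring))

theorem homogeneousSyzygy_injective (hg0 : g ≠ 0) :
    Function.Injective (homogeneousSyzygy hf hg k) := by
  rw [← LinearMap.ker_eq_bot, Submodule.eq_bot_iff]
  intro c hc
  have : g * c = 0 := congrArg (fun x ↦ (x.1 : MvPolynomial σ K)) hc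
  exact Subtype.ext ((mul_eq_zero.1 this).resolve_left hg0)

theorem exact_homogeneousSyzygy_homogeneousMulAddMul (hfg : IsRelPrime f g) (hg0 : g ≠ 0) :
    Function.Exact (homogeneousSyzygy hf hg k) (homogeneousMulAddMul hf hg k) := by
  rintro ⟨a, b⟩
  constructor
  · intro h
    have h' : f * a + g * b = 0 := congrArg Subtype.val h
    obtain ⟨c, hc, hac, hbc⟩ := exists_isHomogeneous_of_mul_add_mul_eq_zero hfg hg0 hg a.2 h'
    exact ⟨⟨c, hc⟩, Prod.ext (Subtype.ext hac.symm) (Subtype.ext hbc.symm)⟩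
  · rintro ⟨c, hc⟩
    rw [← hc]
    exact Subtype.ext (show f * (g * c) + g * -(f * c) = 0 by ring)

end Koszul

theorem exists_isHomogeneous_one_eval_eq_zero_ne_zero [Fintype σ] {v w : σ → K}
    (h : v ∉ K ∙ w) : ∃ ℓ : MvPolynomial σ K, ℓ.IsHomogeneous 1 ∧ eval w ℓ = 0 ∧ eval v ℓ ≠ 0 := by
  classical
  obtain ⟨φ, hφv, hφw⟩ := Submodule.exists_dual_map_eq_bot_of_notMem h inferInstance
  -- `φ`, written as a linear form in the coordinates
  have hφ : ∀ x, eval x ((LinearMap.pi fun _ : Unit ↦ φ).toMatrix'.toMvPolynomial ()) = φ x := by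
    intro x
    rw [Matrix.toMvPolynomial_eval_eq_apply, LinearMap.toMatrix'_mulVec, LinearMap.pi_apply]
  refine ⟨_, Matrix.toMvPolynomial_isHomogeneous _ _, ?_, by rwa [hφ]⟩
  rw [hφ, ← Submodule.mem_bot K, ← hφw]
  exact Submodule.mem_map_of_mem (Submodule.mem_span_singleton_self w)

theorem exists_isHomogeneous_eval_rep_eq_zero_ne_zero [Fintype σ]
    (s : Finset (ℙ K (σ → K))) {P : ℙ K (σ → K)} (hP : P ∉ s) {d : ℕ} (hd : s.card ≤ d) :
    ∃ p : MvPolynomial σ K, p.IsHomogeneous d ∧ (∀ Q ∈ s, eval Q.rep p = 0) ∧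
      eval P.rep p ≠ 0 := by
  classical
  induction s using Finset.induction_on generalizing d with
  | empty =>
    obtain ⟨ℓ, hℓ, -, hℓP⟩ := exists_isHomogeneous_one_eval_eq_zero_ne_zero (v := P.rep) (w := 0)
      (by simpa using P.rep_nonzero)
    exact ⟨ℓ ^ d, by simpa using hℓ.pow d, by simp, by rw [map_pow]; exact pow_ne_zero d hℓP⟩
  | insert Q s hQ ih =>
    rw [Finset.card_insert_of_notMem hQ] at hd
    obtain ⟨p, hp, hps, hpP⟩ := ih (fun h ↦ hP (Finset.mem_insert_of_mem h)) (d := d - 1) (by omega)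
    have hPQ : P.rep ∉ K ∙ Q.rep := by
      rintro hmem
      obtain ⟨a, ha⟩ := Submodule.mem_span_singleton.1 hmem
      apply hP (Finset.mem_insert.2 (Or.inl _))
      rw [← P.mk_rep, ← Q.mk_rep, Projectivization.mk_eq_mk_iff']
      exact ⟨a, ha⟩
    obtain ⟨ℓ, hℓ, hℓQ, hℓP⟩ := exists_isHomogeneous_one_eval_eq_zero_ne_zero hPQ
    refine ⟨ℓ * p, by convert hℓ.mul hp using 1; omega, ?_, by simp [hℓP, hpP]⟩
    simp only [Finset.forall_mem_insert, map_mul]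
    exact ⟨by rw [hℓQ, zero_mul], fun R hR ↦ by rw [hps R hR, mul_zero]⟩

noncomputable def evalRep [Fintype σ] (s : Finset (ℙ K (σ → K))) (d : ℕ) :
    homogeneousSubmodule σ K d →ₗ[K] (s → K) :=
  LinearMap.pi fun Q ↦ (aeval Q.1.rep).toLinearMap ∘ₗ (homogeneousSubmodule σ K d).subtype

theorem evalRep_surjective [Fintype σ] (s : Finset (ℙ K (σ → K))) {d : ℕ} (hd : s.card ≤ d + 1) :
    Function.Surjective (evalRep s d) := by
  classical
  rw [← LinearMap.range_eq_top, eq_top_iff, ← (Pi.basisFun K s).span_eq, Submodule.span_le]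
  rintro _ ⟨Q, rfl⟩
  obtain ⟨p, hp, hps, hpQ⟩ := exists_isHomogeneous_eval_rep_eq_zero_ne_zero (s.erase Q.1)
    (Finset.notMem_erase _ _) (d := d) (by rw [Finset.card_erase_of_mem Q.2]; omega)
  refine ⟨(eval Q.1.rep p)⁻¹ • ⟨p, hp⟩, ?_⟩
  ext R
  by_cases hRQ : R = Q
  · subst hRQ
    simp [evalRep, hpQ]
  · have := hps R.1 (Finset.mem_erase.2 ⟨Subtype.coe_ne_coe.2 hRQ, R.2⟩)
    simp [evalRep, this, hRQ]

theorem card_le_mul_of_forall_eval_rep_eq_zero {f g : MvPolynomial (Fin 3) K} {m n : ℕ}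
    (hf : f.IsHomogeneous m) (hg : g.IsHomogeneous n) (hfg : IsRelPrime f g) (hg0 : g ≠ 0)
    {s : Finset (ℙ K (Fin 3 → K))} (hs : ∀ Q ∈ s, eval Q.rep f = 0 ∧ eval Q.rep g = 0) :
    s.card ≤ m * n := by
  have hvanish : evalRep s (m + n + s.card) ∘ₗ homogeneousMulAddMul hf hg s.card = 0 := by
    refine LinearMap.ext fun x ↦ ?_
    funext Q
    show eval Q.1.rep (f * x.1 + g * x.2) = 0
    simp [(hs Q.1 Q.2).1, (hs Q.1 Q.2).2]
  have key := Module.finrank_add_finrank_le_of_exact (homogeneousSyzygy_injective hf hg _ hg0)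
    (exact_homogeneousSyzygy_homogeneousMulAddMul hf hg _ hfg hg0)
    (evalRep_surjective s (d := m + n + s.card) (by omega)) hvanish
  simp only [Module.finrank_prod, Module.finrank_fintype_fun_eq_card, Fintype.card_coe,
    finrank_homogeneousSubmodule_fin_three] at key
  have := Nat.choose_two_add_add (s.card + 2) m n
  ring_nf at key this
  linarith

end MvPolynomial

theorem stmt_3_general (m n : ℕ) (f g : MvPolynomial (Fin 3) ℂ)
    (hf : f.IsHomogeneous m) (hg : g.IsHomogeneous n)
    (hcop : ¬∃ d : MvPolynomial (Fin 3) ℂ, d ∣ f ∧ d ∣ g ∧ 0 < d.totalDegree) :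
    {Q : Projectivization ℂ (Fin 3 → ℂ) |
        eval Q.rep f = 0 ∧ eval Q.rep g = 0}.Finite ∧
      {Q : Projectivization ℂ (Fin 3 → ℂ) |
          eval Q.rep f = 0 ∧ eval Q.rep g = 0}.ncard ≤ m * n := by
  have hfg := isRelPrime_of_not_exists_dvd_totalDegree_pos hcop
  refine Set.finite_and_ncard_le_of_forall_finset_card_le fun s hs ↦ ?_
  rcases eq_or_ne g 0 with rfl | hg0
  · have hf0 : f ≠ 0 := by
      rintro rfl
      exact not_isRelPrime_zero_zero hfg
    rw [mul_comm]
    exact card_le_mul_of_forall_eval_rep_eq_zero hg hf hfg.symm hf0 fun Q hQ ↦ (hs hQ).symm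
  · exact card_le_mul_of_forall_eval_rep_eq_zero hf hg hfg hg0 fun Q hQ ↦ hs hQ

theorem stmt_3 (m n : ℕ) (hm : 1 ≤ m) (hn : 1 ≤ n) (f g : MvPolynomial (Fin 3) ℂ)
    (hf : f.IsHomogeneous m) (hg : g.IsHomogeneous n)
    (hcop : ¬∃ d : MvPolynomial (Fin 3) ℂ, d ∣ f ∧ d ∣ g ∧ 0 < d.totalDegree) :
    {Q : Projectivization ℂ (Fin 3 → ℂ) |
        eval Q.rep f = 0 ∧ eval Q.rep g = 0}.Finite ∧
      {Q : Projectivization ℂ (Fin 3 → ℂ) |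
          eval Q.rep f = 0 ∧ eval Q.rep g = 0}.ncard ≤ m * n :=
  stmt_3_general m n f g hf hg hcop
end

section
/- Let n ≥ 2 and let a ∈ ℂ³ be a nonzero vector. The linear map which sends a homogeneous polynomial f of degree n in ℂ[x₀,x₁,x₂] to the family of values at a of all its iterated partial derivatives of total order exactly n−2 (indexed by the binom(n,2) multi-indices α ∈ ℕ³ with |α| = n−2) is surjective onto ℂ^{binom(n,2)}. -/
open MvPolynomial

/-!
Choose a coordinate `i` with `a i ≠ 0`. For `|α| = n - 2` the monomial `x^α xᵢ²` has degree `n`,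
and `∂^γ (x^α xᵢ²)(a)` is a nonzero multiple of `aᵢ²` for `γ = α`, while for `γ ≠ α` it can only be
nonzero when `γ ≤ α + 2eᵢ`, which together with `|γ| = |α|` forces `γᵢ > αᵢ`. So the images of
these monomials are triangular with respect to `n - 2 - αᵢ` and span `ℂ^{binom(n,2)}`. The count of
multi-indices is stars and bars.
-/

theorem LinearMap.surjective_of_triangular {K M S ι : Type*} [Field K] [AddCommGroup M]
    [Module K M] [Finite S] [Preorder ι] [WellFoundedLT ι]
    (L : M →ₗ[K] S → K) (v : S → M) (ρ : S → ι) (hdiag : ∀ α, L (v α) α ≠ 0)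
    (htri : ∀ α γ, γ ≠ α → L (v α) γ ≠ 0 → ρ γ < ρ α) :
    Function.Surjective L := by
  classical
  cases nonempty_fintype S
  have hsingle : ∀ α (c : K), Pi.single α c ∈ LinearMap.range L := by
    intro α
    induction α using (InvImage.wf ρ wellFounded_lt).induction with
    | _ α ih =>
    set u := L (v α)
    have hrest : u - Pi.single α (u α) ∈ LinearMap.range L := by
      have hexpand := Finset.univ_sum_single (u - Pi.single α (u α))
      rw [← hexpand]
      refine Submodule.sum_mem _ fun γ _ => ?_
      by_cases hγ : γ = α
      · simp [hγ]
      by_cases hu : u γ = 0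
      · simp [hγ, hu]
      · simpa [hγ] using ih γ (htri α γ hγ hu) (u γ)
    have hlead : Pi.single α (u α) ∈ LinearMap.range L := by
      have h := Submodule.sub_mem _ (LinearMap.mem_range_self L (v α)) hrest
      rwa [sub_sub_cancel] at h
    intro c
    have h := Submodule.smul_mem _ (c / u α) hlead
    rwa [← Pi.single_smul', smul_eq_mul, div_mul_cancel₀ c (hdiag α)] at h
  intro f
  rw [← Finset.univ_sum_single f]
  exact LinearMap.mem_range.mp (Submodule.sum_mem _ fun α _ => hsingle α (f α))

theorem eq_of_sum_eq_of_le_add_single {ι : Type*} [Fintype ι] [DecidableEq ι] {α γ : ι → ℕ}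
    {i : ι} {k : ℕ} (hsum : ∑ j, γ j = ∑ j, α j) (hle : γ ≤ α + Pi.single i k)
    (hi : γ i ≤ α i) : γ = α := by
  have hγα : γ ≤ α := by
    intro j
    rcases eq_or_ne j i with rfl | hj
    · exact hi
    · simpa [hj] using hle j
  funext j
  exact (Finset.sum_eq_sum_iff_of_le fun j _ => hγα j).1 hsum j (Finset.mem_univ j)

theorem MvPolynomial.pderiv_pow_monomial {R σ : Type*} [CommSemiring R] (i : σ) (k : ℕ)
    (β : σ →₀ ℕ) (c : R) :
    ((pderiv i).toLinearMap ^ k) (monomial β c)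
      = monomial (β - Finsupp.single i k) (c * (β i).descFactorial k) := by
  classical
  induction k with
  | zero => simp
  | succ k ih =>
    rw [pow_succ', Module.End.mul_apply, ih, Derivation.coeFn_coe, pderiv_monomial, tsub_tsub,
      ← Finsupp.single_add]
    simp only [Finsupp.tsub_apply, Finsupp.single_eq_same, Nat.descFactorial_succ]
    push_cast
    ring_nf

theorem MvPolynomial.monomial_add_single_mem_homogeneousSubmodule {σ R : Type*} [Fintype σ]
    [DecidableEq σ] [CommSemiring R] (α : σ → ℕ) (i : σ) (k : ℕ) (r : R) :
    monomial (Finsupp.equivFunOnFinite.symm (α + Pi.single i k)) r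
      ∈ homogeneousSubmodule σ R (∑ j, α j + k) := by
  rw [mem_homogeneousSubmodule]
  refine isHomogeneous_monomial _ ?_
  simp [Finsupp.degree_eq_sum, Finset.sum_add_distrib]

theorem iterPD_monomial (γ : Fin 3 → ℕ) (β : Fin 3 →₀ ℕ) (c : ℂ) :
    iterPD γ (monomial β c)
      = monomial (β - Finsupp.equivFunOnFinite.symm γ)
          (c * ∏ j, ((β j).descFactorial (γ j) : ℂ)) := by
  simp only [iterPD, LinearMap.comp_apply, pderiv_pow_monomial, Finsupp.tsub_apply,
    Fin.prod_univ_three]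
  congr 1
  · congr 1
    ext j
    fin_cases j <;> simp
  · simp [Finsupp.single_eq_of_ne]
    ring

theorem eval_iterPD_monomial (a : Fin 3 → ℂ) (γ : Fin 3 → ℕ) (β : Fin 3 →₀ ℕ) :
    eval a (iterPD γ (monomial β 1))
      = ∏ j, ((β j).descFactorial (γ j) * a j ^ (β j - γ j)) := by
  rw [iterPD_monomial, eval_monomial, Finsupp.prod_fintype _ _ (fun j => pow_zero (a j)),
    one_mul, Finset.prod_mul_distrib]
  simp

theorem le_of_eval_iterPD_monomial_ne_zero {a : Fin 3 → ℂ} {γ b : Fin 3 → ℕ}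
    (h : eval a (iterPD γ (monomial (Finsupp.equivFunOnFinite.symm b) 1)) ≠ 0) : γ ≤ b := by
  intro j
  by_contra hj
  refine h ?_
  rw [eval_iterPD_monomial]
  refine Finset.prod_eq_zero (Finset.mem_univ j) ?_
  simp [Nat.descFactorial_eq_zero_iff_lt.2 (not_le.1 hj)]

theorem eval_iterPD_monomial_add_single_ne_zero {a : Fin 3 → ℂ} {i : Fin 3} (hi : a i ≠ 0)
    (α : Fin 3 → ℕ) (k : ℕ) :
    eval a (iterPD α (monomial (Finsupp.equivFunOnFinite.symm (α + Pi.single i k)) 1)) ≠ 0 := by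
  rw [eval_iterPD_monomial, Finset.prod_ne_zero_iff]
  intro j _
  simp only [Finsupp.coe_equivFunOnFinite_symm, Pi.add_apply]
  refine mul_ne_zero (Nat.cast_ne_zero.2 ?_) ?_
  · rw [Ne, Nat.descFactorial_eq_zero_iff_lt]
    omega
  · rcases eq_or_ne j i with rfl | hj
    · exact pow_ne_zero _ hi
    · simp [Pi.single_eq_of_ne hj]

noncomputable def symEquivSumEq (d : ℕ) :
    Sym (Fin 3) d ≃ {α : Fin 3 → ℕ // α 0 + α 1 + α 2 = d} :=
  (Sym.equivNatSumOfFintype (Fin 3) d).trans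
    (Equiv.subtypeEquivRight fun α => by rw [Fin.sum_univ_three])

instance (d : ℕ) : Finite {α : Fin 3 → ℕ // α 0 + α 1 + α 2 = d} :=
  Finite.of_equiv _ (symEquivSumEq d)

theorem card_sumEq (d : ℕ) :
    Nat.card {α : Fin 3 → ℕ // α 0 + α 1 + α 2 = d} = (d + 2).choose 2 := by
  rw [← Nat.card_congr (symEquivSumEq d), Nat.card_eq_fintype_card, Sym.card_sym_eq_choose,
    Fintype.card_fin, show 3 + d - 1 = d + 2 by omega, Nat.choose_symm_add]

theorem surjective_eval_iterPD (n : ℕ) (hn : 2 ≤ n) (a : Fin 3 → ℂ) (ha : a ≠ 0) :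
    Function.Surjective
      (fun f : homogeneousSubmodule (Fin 3) ℂ n =>
        fun α : {α : Fin 3 → ℕ // α 0 + α 1 + α 2 = n - 2} => eval a (iterPD α.1 f.1)) := by
  obtain ⟨i, hi⟩ : ∃ i, a i ≠ 0 := Function.ne_iff.mp ha
  let S := {α : Fin 3 → ℕ // α 0 + α 1 + α 2 = n - 2}
  have hsum (α : S) : ∑ j, α.1 j = n - 2 := by rw [Fin.sum_univ_three]; exact α.2
  have hmem (α : S) : monomial (Finsupp.equivFunOnFinite.symm (α.1 + Pi.single i 2)) (1 : ℂ)
      ∈ homogeneousSubmodule (Fin 3) ℂ n := by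
    simpa [hsum, Nat.sub_add_cancel hn] using
      monomial_add_single_mem_homogeneousSubmodule α.1 i 2 1
  let L : homogeneousSubmodule (Fin 3) ℂ n →ₗ[ℂ] S → ℂ := LinearMap.pi fun γ =>
    (aeval a).toLinearMap ∘ₗ iterPD γ.1 ∘ₗ (homogeneousSubmodule (Fin 3) ℂ n).subtype
  have hL : ⇑L = fun f γ => eval a (iterPD γ.1 f.1) := by
    funext f γ
    simp [L]
  rw [← hL]
  refine L.surjective_of_triangular (fun α => ⟨_, hmem α⟩) (fun α => n - 2 - α.1 i)
    (fun α => by simpa [hL] using eval_iterPD_monomial_add_single_ne_zero hi α.1 2) ?_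
  intro α γ hne hval
  rw [hL] at hval
  by_contra hlt
  have hγi : γ.1 i ≤ n - 2 :=
    (Finset.single_le_sum (by simp) (Finset.mem_univ i)).trans_eq (hsum γ)
  refine hne (Subtype.ext (eq_of_sum_eq_of_le_add_single ((hsum γ).trans (hsum α).symm)
    (le_of_eval_iterPD_monomial_ne_zero hval) ?_))
  exact not_lt.1 fun h => hlt (Nat.sub_lt_sub_left (h.trans_le hγi) h)

theorem stmt_7 (n : ℕ) (hn : 2 ≤ n) (a : Fin 3 → ℂ) (ha : a ≠ 0) :
    Nat.card {α : Fin 3 → ℕ // α 0 + α 1 + α 2 = n - 2} = n.choose 2 ∧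
      Function.Surjective
        (fun f : homogeneousSubmodule (Fin 3) ℂ n =>
          fun α : {α : Fin 3 → ℕ // α 0 + α 1 + α 2 = n - 2} =>
            eval a (iterPD α.1 f.1)) := by
  refine ⟨?_, surjective_eval_iterPD n hn a ha⟩
  rw [card_sumEq, Nat.sub_add_cancel hn]
end
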